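/- For every M > 0 there exists a constant c = c(M) > 0 such that for all R ≥ 2, all α ≥ c R log R, and all x ∈ ℝ with |x| ≥ 1, one has sinh(2α/R²) · sinh²(2αx/R) ≥ (8αM/R) · cosh(α/R²) · cosh(2αx/R). -/
import Mathlib


/-- Elementary inequality used in the discrete Carleman estimate to absorb the
term coming from the first derivative of the weight `φ` (with `M` playing the role of
`‖φ'‖_∞`): for `α ≥ c R log R`, `R ≥ 2` and `|x| ≥ 1`,
`sinh(2α/R²) sinh²(2αx/R) ≥ (8αM/R) cosh(α/R²) cosh(2αx/R)`. -/
theorem sinh_absorption_first_derivative (M : ℝ) (hM : 0 < M) :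
    ∃ c : ℝ, 0 < c ∧ ∀ R : ℝ, 2 ≤ R → ∀ α : ℝ, c * R * Real.log R ≤ α →
      ∀ x : ℝ, 1 ≤ |x| →
        (8 * α * M / R) * Real.cosh (α / R ^ 2) * Real.cosh (2 * α * x / R) ≤
          Real.sinh (2 * α / R ^ 2) * (Real.sinh (2 * α * x / R)) ^ 2 := by
  refine ⟨M + 2, by linarith, ?_⟩
  intro R hR α hα x hx
  have hR0 : (0 : ℝ) < R := by linarith
  have hlog2 : (1:ℝ)/2 ≤ Real.log 2 := by
    have := Real.log_two_gt_d9; linarith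
  have hlogR : Real.log 2 ≤ Real.log R := Real.log_le_log (by norm_num) hR
  have hlogRpos : 0 < Real.log R := lt_of_lt_of_le (by linarith) hlogR
  have hαpos : 0 < α := lt_of_lt_of_le (by positivity) hα
  set t := 2 * α * x / R with ht
  set s := α / R ^ 2 with hs
  have hspos : 0 < s := by positivity
  -- |t| ≥ 2α/R
  have habs : 2 * α / R ≤ |t| := by
    rw [ht, abs_div, abs_of_pos hR0, abs_mul,
      abs_of_pos (show (0:ℝ) < 2 * α by linarith)]
    refine (div_le_div_iff_of_pos_right hR0).mpr ?_
    nlinarith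
  -- exp ((2c) log R) ≥ 8 (1+M) R where c = M+2
  have hexp1 : 8 * (1 + M) * R ≤ Real.exp (2 * (M + 2) * Real.log R) := by
    have hsplit : Real.exp (2 * (M + 2) * Real.log R)
        = Real.exp ((2 * M + 3) * Real.log R) * R := by
      rw [← Real.exp_log hR0, ← Real.exp_add, Real.exp_log hR0]
      ring_nf
    have h1 : (2 * M + 3) * Real.log 2 ≤ (2 * M + 3) * Real.log R :=
      mul_le_mul_of_nonneg_left hlogR (by linarith)
    have h2 : Real.exp ((2 * M + 3) * Real.log 2) ≤ Real.exp ((2 * M + 3) * Real.log R) :=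
      Real.exp_le_exp.mpr h1
    have h3 : 8 * (1 + M) ≤ Real.exp ((2 * M + 3) * Real.log 2) := by
      have hsplit2 : Real.exp ((2 * M + 3) * Real.log 2)
          = Real.exp (2 * M * Real.log 2) * Real.exp (3 * Real.log 2) := by
        rw [← Real.exp_add]; ring_nf
      have h8 : Real.exp (3 * Real.log 2) = 8 := by
        rw [show (3:ℝ) * Real.log 2 = Real.log 8 by
          rw [show (8:ℝ) = 2 ^ (3:ℕ) by norm_num, Real.log_pow]; push_cast; ring]
        rw [Real.exp_log (by norm_num)]
      have h4 : 1 + M ≤ Real.exp (2 * M * Real.log 2) := by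
        have := Real.add_one_le_exp (2 * M * Real.log 2)
        nlinarith
      rw [hsplit2, h8]
      nlinarith [Real.exp_pos (2 * M * Real.log 2)]
    calc 8 * (1 + M) * R ≤ Real.exp ((2 * M + 3) * Real.log 2) * R :=
          mul_le_mul_of_nonneg_right h3 hR0.le
      _ ≤ Real.exp ((2 * M + 3) * Real.log R) * R :=
          mul_le_mul_of_nonneg_right h2 hR0.le
      _ = Real.exp (2 * (M + 2) * Real.log R) := hsplit.symm
  -- cosh t ≥ 4 M R + 1
  have hC : 4 * M * R + 1 ≤ Real.cosh t := by
    have h1 : 2 * (M + 2) * Real.log R ≤ 2 * α / R := by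
      rw [le_div_iff₀ hR0]
      nlinarith
    have h2 : Real.exp (2 * (M + 2) * Real.log R) ≤ Real.exp |t| :=
      Real.exp_le_exp.mpr (le_trans h1 habs)
    have h3 : Real.exp |t| / 2 ≤ Real.cosh |t| := by
      rw [Real.cosh_eq]
      have := Real.exp_pos (-|t|)
      linarith
    rw [← Real.cosh_abs]
    linarith
  -- key algebraic facts
  have hCone : 1 ≤ Real.cosh t := Real.one_le_cosh t
  have e1 : Real.sinh (2 * α / R ^ 2) = 2 * Real.sinh s * Real.cosh s := by
    rw [show 2 * α / R ^ 2 = 2 * s by rw [hs]; ring, Real.sinh_two_mul]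
  have e2 : Real.sinh t ^ 2 = Real.cosh t ^ 2 - 1 := by
    have := Real.cosh_sq t; linarith
  have hsinh : s ≤ Real.sinh s := Real.self_le_sinh_iff.mpr hspos.le
  have hcosh1 : 1 ≤ Real.cosh s := Real.one_le_cosh s
  have key : 4 * M * R * Real.cosh t ≤ Real.cosh t ^ 2 - 1 := by
    nlinarith [mul_le_mul_of_nonneg_right
      (show 4 * M * R ≤ Real.cosh t - 1 by linarith)
      (show (0:ℝ) ≤ Real.cosh t by linarith)]
  -- conclude
  rw [e1, e2]
  have step1 : 8 * α * M / R * Real.cosh s * Real.cosh t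
      = 2 * s * Real.cosh s * (4 * M * R * Real.cosh t) := by
    rw [hs]; field_simp; ring
  rw [step1]
  have h5 : 2 * s * Real.cosh s * (4 * M * R * Real.cosh t)
      ≤ 2 * s * Real.cosh s * (Real.cosh t ^ 2 - 1) :=
    mul_le_mul_of_nonneg_left key (by positivity)
  have h6 : 2 * s * Real.cosh s * (Real.cosh t ^ 2 - 1)
      ≤ 2 * Real.sinh s * Real.cosh s * (Real.cosh t ^ 2 - 1) := by
    have hnn : 0 ≤ Real.cosh t ^ 2 - 1 := by rw [← e2]; positivity
    have h7 : 2 * s * Real.cosh s ≤ 2 * Real.sinh s * Real.cosh s :=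
      mul_le_mul_of_nonneg_right (by linarith) (Real.cosh_pos s).le
    exact mul_le_mul_of_nonneg_right h7 hnn
  linarith
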